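/- (Theorem 4.1, algebraic form) Suppose P is an invertible real n×n matrix with P·K·P^{−1} = −Kᵀ, and F_1,…,F_s are real n×n matrices with P·F_i·P^{−1} = −F_iᵀ for all i. Then for every real s×s matrix A, the VP condition holds: det(I_{sn} − h·M(A;F)) = det(exp(h·K))·det(I_{sn} + h·M(Aᵀ;F)). -/

import Mathlib

open Matrix

/-- The block matrix `M(A;F)` whose `(i,j)` block is `a_{ij}·exp((c_i−c_j)·h·K)·F_j`. -/
noncomputable def Mblk {n s : ℕ} (h : ℝ) (K : Matrix (Fin n) (Fin n) ℝ) (c : Fin s → ℝ)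
    (A : Matrix (Fin s) (Fin s) ℝ) (F : Fin s → Matrix (Fin n) (Fin n) ℝ) :
    Matrix (Fin s × Fin n) (Fin s × Fin n) ℝ :=
  fun p q => A p.1 q.1 * (NormedSpace.exp (((c p.1 - c q.1) * h) • K) * F q.1) p.2 q.2

/-!
The hypothesis `P X P⁻¹ = -Xᵀ` says that `X` is skew-adjoint for the bilinear form of `P`
(`P.IsSkewAdjoint X`), so `exp (t • K)` preserves that form. Write `E i = exp ((c i * h) • K)`.
Since `exp (((c i - c j) * h) • K) = E i * (E j)⁻¹`, the identity `det (1 + X Y) = det (1 + Y X)`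
replaces `M(A;F)` by the block matrix `N(A;G)` with blocks `a_ij • G j`, where
`G j = (E j)⁻¹ * F j * E j` is again skew-adjoint for `P`. Conjugating `1 - N(A;G)` by
`diag (P, …, P)` replaces each `G j` by `-(G j)ᵀ`; transposing and swapping factors once more
gives `1 + N(Aᵀ;G)`. Finally `det (exp (h • K))` equals `det (exp (-h • K))`, its inverse, and is
positive (the exponential is a square), so it is `1`.
-/

open NormedSpace
open scoped Kronecker

namespace Matrix

section SkewAdjoint

variable {m R : Type*} [Fintype m] [CommRing R]

theorem IsSkewAdjoint.mul_mul {P g g' X : Matrix m m R} (h₁ : gᵀ * P = P * g')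
    (h₂ : g'ᵀ * P = P * g) (hX : P.IsSkewAdjoint X) : P.IsSkewAdjoint (g' * X * g) := by
  have hX' : Xᵀ * P = P * -X := hX
  calc (g' * X * g)ᵀ * P = gᵀ * (Xᵀ * (g'ᵀ * P)) := by
        simp only [transpose_mul, Matrix.mul_assoc]
    _ = gᵀ * P * -X * g := by rw [h₂, ← Matrix.mul_assoc Xᵀ, hX']; simp only [Matrix.mul_assoc]
    _ = P * -(g' * X * g) := by
        rw [h₁]; simp only [Matrix.mul_neg, Matrix.neg_mul, Matrix.mul_assoc]

variable [DecidableEq m]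

theorem isSkewAdjoint_of_conj_eq_neg_transpose {P X : Matrix m m R} (hP : IsUnit P)
    (h : P * X * P⁻¹ = -Xᵀ) : P.IsSkewAdjoint X := by
  have hPinv : P⁻¹ * P = 1 := nonsing_inv_mul P ((isUnit_iff_isUnit_det P).mp hP)
  rw [Matrix.IsSkewAdjoint, Matrix.IsAdjointPair, ← neg_neg Xᵀ, ← h, Matrix.mul_neg,
    Matrix.neg_mul, Matrix.mul_assoc, hPinv, Matrix.mul_one]

theorem transpose_eq_conj_neg_of_isSkewAdjoint {P X : Matrix m m R} (hP : IsUnit P)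
    (hX : P.IsSkewAdjoint X) : Xᵀ = P * -X * P⁻¹ := by
  have hPinv : P * P⁻¹ = 1 := mul_nonsing_inv P ((isUnit_iff_isUnit_det P).mp hP)
  rw [← show Xᵀ * P = P * -X from hX, Matrix.mul_assoc, hPinv, Matrix.mul_one]

end SkewAdjoint

section Exponential

variable {m : Type*} [Fintype m] [DecidableEq m]

theorem transpose_exp_mul_of_isSkewAdjoint {𝔸 : Type*} [NormedCommRing 𝔸] [NormedAlgebra ℚ 𝔸]
    [CompleteSpace 𝔸] {P X : Matrix m m 𝔸} (hP : IsUnit P) (hX : P.IsSkewAdjoint X) :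
    (exp X)ᵀ * P = P * exp (-X) := by
  rw [← exp_transpose, transpose_eq_conj_neg_of_isSkewAdjoint hP hX, exp_conj _ _ hP,
    Matrix.mul_assoc, nonsing_inv_mul P ((isUnit_iff_isUnit_det P).mp hP), Matrix.mul_one]

theorem det_exp_pos (X : Matrix m m ℝ) : 0 < (exp X).det := by
  have hsq : exp X = exp ((1 / 2 : ℝ) • X) * exp ((1 / 2 : ℝ) • X) := by
    rw [← exp_add_of_commute _ _ (Commute.refl _), ← add_smul, add_halves, one_smul]
  rw [hsq, det_mul]
  exact mul_self_pos.mpr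
    ((isUnit_iff_isUnit_det _).mp (Matrix.isUnit_exp ((1 / 2 : ℝ) • X))).ne_zero

theorem det_exp_eq_one_of_isSkewAdjoint {P X : Matrix m m ℝ} (hP : IsUnit P)
    (hX : P.IsSkewAdjoint X) : (exp X).det = 1 := by
  have hsymm : (exp X).det = (exp (-X)).det := by
    have := congrArg det (transpose_exp_mul_of_isSkewAdjoint hP hX)
    rw [det_mul, det_mul, det_transpose, mul_comm] at this
    exact ((isUnit_iff_isUnit_det P).mp hP).mul_left_cancel this
  have hinv : (exp X).det * (exp (-X)).det = 1 := by
    rw [← det_mul, ← exp_add_of_commute _ _ ((Commute.refl X).neg_right), add_neg_cancel,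
      exp_zero, det_one]
  nlinarith [det_exp_pos X]

end Exponential

section BlockMatrix

variable {m ι R : Type*} [Fintype m] [DecidableEq m] [Fintype ι] [DecidableEq ι] [CommRing R]

theorem det_one_sub_one_kronecker_mul_blockDiagonal {P : Matrix m m R} {G : ι → Matrix m m R}
    (hP : IsUnit P) (hG : ∀ j, P.IsSkewAdjoint (G j)) (A : Matrix ι ι R) :
    det (1 - ((1 : Matrix m m R) ⊗ₖ A) * blockDiagonal G) =
      det (1 + ((1 : Matrix m m R) ⊗ₖ Aᵀ) * blockDiagonal G) := by
  set Q : Matrix (m × ι) (m × ι) R := blockDiagonal fun _ => P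
  have hQA : Q * (1 ⊗ₖ A) = (1 ⊗ₖ A) * Q := by
    rw [show Q = P ⊗ₖ 1 from (kronecker_one P).symm, ← mul_kronecker_mul, ← mul_kronecker_mul,
      Matrix.mul_one, Matrix.one_mul, Matrix.mul_one, Matrix.one_mul]
  have hQG : (blockDiagonal G)ᵀ * Q = Q * -blockDiagonal G := by
    rw [blockDiagonal_transpose, ← blockDiagonal_mul, ← blockDiagonal_neg, ← blockDiagonal_mul]
    exact congrArg blockDiagonal (funext hG)
  have hQ : IsUnit Q.det := by
    rw [det_blockDiagonal, Finset.prod_const]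
    exact ((isUnit_iff_isUnit_det P).mp hP).pow _
  have hconj : Q * (1 - (1 ⊗ₖ A) * blockDiagonal G) =
      (1 + (1 ⊗ₖ A) * (blockDiagonal G)ᵀ) * Q := by
    rw [Matrix.mul_sub, Matrix.add_mul, Matrix.mul_one, Matrix.one_mul, ← Matrix.mul_assoc, hQA,
      Matrix.mul_assoc, Matrix.mul_assoc, hQG, Matrix.mul_neg, Matrix.mul_neg, sub_eq_add_neg]
  calc det (1 - (1 ⊗ₖ A) * blockDiagonal G)
      = det (1 + (1 ⊗ₖ A) * (blockDiagonal G)ᵀ) :=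
        hQ.mul_left_cancel (by rw [← det_mul, hconj, det_mul, mul_comm])
    _ = det ((1 + (1 ⊗ₖ Aᵀ) * blockDiagonal G)ᵀ) := by
        rw [det_one_add_mul_comm, transpose_add, transpose_one, transpose_mul,
          ← kroneckerMap_transpose, transpose_one, transpose_transpose]
    _ = det (1 + (1 ⊗ₖ Aᵀ) * blockDiagonal G) := det_transpose _

end BlockMatrix

end Matrix

theorem smul_Mblk {n s : ℕ} (r h : ℝ) (K : Matrix (Fin n) (Fin n) ℝ) (c : Fin s → ℝ)
    (A : Matrix (Fin s) (Fin s) ℝ) (F : Fin s → Matrix (Fin n) (Fin n) ℝ) :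
    r • Mblk h K c A F = Mblk h K c (r • A) F := by
  ext p q
  simp only [Mblk, Matrix.smul_apply, smul_eq_mul, mul_assoc]

-- Mathlib's `blockDiagonal` puts the block index second, hence the swap.
theorem Mblk_submatrix_swap {n s : ℕ} (h : ℝ) (K : Matrix (Fin n) (Fin n) ℝ) (c : Fin s → ℝ)
    (A : Matrix (Fin s) (Fin s) ℝ) (F : Fin s → Matrix (Fin n) (Fin n) ℝ) :
    (Mblk h K c A F).submatrix Prod.swap Prod.swap =
      blockDiagonal (fun i => exp ((c i * h) • K)) *
        ((1 ⊗ₖ A) * blockDiagonal (fun j => exp (-((c j * h) • K)) * F j)) := by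
  have hexp : ∀ i j,
      exp (((c i - c j) * h) • K) = exp ((c i * h) • K) * exp (-((c j * h) • K)) := fun i j => by
    rw [← exp_add_of_commute _ _ (((Commute.refl K).smul_left _).smul_right _).neg_right, sub_mul,
      sub_smul, sub_eq_add_neg]
  ext ⟨p, i⟩ ⟨q, j⟩
  simp only [submatrix_apply, Prod.swap_prod_mk, Mblk, hexp, mul_apply, blockDiagonal_apply,
    kroneckerMap_apply, one_apply, Fintype.sum_prod_type, ite_mul, mul_ite, one_mul, zero_mul,
    mul_zero, Finset.sum_ite_eq', Finset.sum_ite_eq, Finset.sum_ite_irrel, Finset.sum_const_zero,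
    Finset.mem_univ, if_true, Finset.mul_sum, Finset.sum_mul, mul_assoc, mul_left_comm]
  exact Finset.sum_comm

theorem stmt_6 (n s : ℕ) (h : ℝ) (K : Matrix (Fin n) (Fin n) ℝ) (c : Fin s → ℝ)
    (P : Matrix (Fin n) (Fin n) ℝ) (hP : IsUnit P)
    (hK : P * K * P⁻¹ = -Kᵀ)
    (F : Fin s → Matrix (Fin n) (Fin n) ℝ)
    (hF : ∀ i, P * F i * P⁻¹ = -(F i)ᵀ) :
    ∀ A : Matrix (Fin s) (Fin s) ℝ,
      ((1 : Matrix (Fin s × Fin n) (Fin s × Fin n) ℝ) - h • Mblk h K c A F).det =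
        (NormedSpace.exp (h • K)).det *
          ((1 : Matrix (Fin s × Fin n) (Fin s × Fin n) ℝ) + h • Mblk h K c Aᵀ F).det := by
  intro A
  have hKt : ∀ t : ℝ, P.IsSkewAdjoint (t • K) := fun t =>
    (mem_skewAdjointMatricesSubmodule _ _).mp <| Submodule.smul_mem _ t <|
      (mem_skewAdjointMatricesSubmodule _ _).mpr (isSkewAdjoint_of_conj_eq_neg_transpose hP hK)
  have hG : ∀ j, P.IsSkewAdjoint (exp (-((c j * h) • K)) * F j * exp ((c j * h) • K)) :=
    fun j => (isSkewAdjoint_of_conj_eq_neg_transpose hP (hF j)).mul_mul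
      (transpose_exp_mul_of_isSkewAdjoint hP (hKt _))
      (by simpa only [neg_smul, neg_neg] using
        transpose_exp_mul_of_isSkewAdjoint hP (hKt (-(c j * h))))
  rw [det_exp_eq_one_of_isSkewAdjoint hP (hKt h), one_mul, smul_Mblk, smul_Mblk,
    ← det_reindexAlgEquiv ℝ ℝ (Equiv.prodComm (Fin s) (Fin n)),
    ← det_reindexAlgEquiv ℝ ℝ (Equiv.prodComm (Fin s) (Fin n))]
  simp only [map_sub, map_add, map_one, coe_reindexAlgEquiv, reindex_apply,
    Equiv.prodComm_symm, Equiv.coe_prodComm, Mblk_submatrix_swap]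
  rw [det_one_sub_mul_comm, det_one_add_mul_comm, Matrix.mul_assoc, Matrix.mul_assoc,
    ← blockDiagonal_mul, ← transpose_smul]
  exact det_one_sub_one_kronecker_mul_blockDiagonal hP hG (h • A)
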